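/- Let (X,G) be a transitive topological dynamical system (G countably infinite discrete amenable) and m ∈ ℕ. Then either the set DE^m of diam-mean m-equicontinuity points is a dense G_δ set (almost diam-mean m-equicontinuity), or DE^m = ∅ and (X,G) is diam-mean m-sensitive, i.e. there is ε > 0 such that sup_F limsup_n (1/|F_n|) Σ_{g∈F_n} diam_m(gU) ≥ ε for every nonempty open U ⊆ X. -/

import Mathlib

open Filter Metric Set Pointwise MulAction
open scoped Classical

noncomputable def folnerAvg {G : Type*} (F : ℕ → Finset G) (φ : G → ℝ) (n : ℕ) : ℝ :=
  (∑ g ∈ F n, φ g) / (F n).card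

/-- A Følner sequence: nonempty finite sets with `|F_n △ K F_n| / |F_n| → 0`. -/
def IsFolner {G : Type*} [Group G] (F : ℕ → Finset G) : Prop :=
  (∀ n, (F n).Nonempty) ∧
  ∀ K : Finset G, K.Nonempty →
    Tendsto (fun n =>
      ((symmDiff (F n) (Finset.image₂ (· * ·) K (F n))).card : ℝ) / (F n).card)
      atTop (nhds 0)

/-- Upper Banach density: sup over Følner sequences of the upper density. -/
noncomputable def uBD {G : Type*} [Group G] (S : Set G) : ℝ :=
  sSup {a | ∃ F : ℕ → Finset G, IsFolner F ∧
    a = limsup (folnerAvg F (S.indicator fun _ => (1 : ℝ))) atTop}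

/-- Lower Banach density: inf over Følner sequences of the lower density. -/
noncomputable def lBD {G : Type*} [Group G] (S : Set G) : ℝ :=
  sInf {a | ∃ F : ℕ → Finset G, IsFolner F ∧
    a = liminf (folnerAvg F (S.indicator fun _ => (1 : ℝ))) atTop}

/-- `sup_F limsup_n (1/|F_n|) Σ_{g ∈ F_n} φ(g)`. -/
noncomputable def supFolnerLimsup {G : Type*} [Group G] (φ : G → ℝ) : ℝ :=
  sSup {a | ∃ F : ℕ → Finset G, IsFolner F ∧ a = limsup (folnerAvg F φ) atTop}

/-- Minimal pairwise distance of an `m`-tuple. -/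
noncomputable def minDist {X : Type*} [MetricSpace X] (m : ℕ) (x : Fin m → X) : ℝ :=
  sInf {r | ∃ i j : Fin m, i < j ∧ r = dist (x i) (x j)}

/-- `diam_m(A)`: sup over `m`-tuples in `A` of the minimal pairwise distance. -/
noncomputable def diamm {X : Type*} [MetricSpace X] (m : ℕ) (A : Set X) : ℝ :=
  sSup {r | ∃ x : Fin m → X, (∀ i, x i ∈ A) ∧ r = minDist m x}

section Dyn

variable (G : Type*) [Group G] (X : Type*) [MetricSpace X] [MulAction G X]

/-- `FS^m_ε`: points `x` admitting `δ > 0` with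
`uBD {g : diam_m(g B(x,δ)) < ε} > 0`. -/
noncomputable def FSset (m : ℕ) (ε : ℝ) : Set X :=
  {x : X | ∃ δ > 0, 0 < uBD {g : G | diamm m (g • ball x δ) < ε}}

/-- `x` is a frequent `m`-stability point. -/
def IsFreqStablePt (m : ℕ) (x : X) : Prop :=
  ∀ ε > 0, ∃ δ > 0, ∀ A : Set X, x ∈ A → Metric.diam A < δ →
    0 < uBD {g : G | diamm m (g • A) < ε}

/-- The set of frequent `m`-stability points. -/
def FreqStablePts (m : ℕ) : Set X := {x : X | IsFreqStablePt G X m x}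

/-- `(X,G)` is frequently `m`-stable. -/
def FreqStable (m : ℕ) : Prop :=
  ∀ ε > 0, ∃ δ > 0, ∀ A : Set X, Metric.diam A < δ →
    0 < uBD {g : G | diamm m (g • A) < ε}

/-- `(X,G)` is strongly `m`-spreading. -/
def StronglySpreading (m : ℕ) : Prop :=
  ∃ ε > 0, ∀ U : Set X, IsOpen U → U.Nonempty →
    uBD {g : G | diamm m (g • U) < ε} = 0

/-- `DE^m_ε`: points admitting `δ > 0` with
`sup_F limsup_n (1/|F_n|) Σ_{g∈F_n} diam_m(g B(x,δ)) < ε`. -/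
noncomputable def DEset (m : ℕ) (ε : ℝ) : Set X :=
  {x : X | ∃ δ > 0, supFolnerLimsup (fun g : G => diamm m (g • ball x δ)) < ε}

/-- The set of diam-mean `m`-equicontinuity points. -/
noncomputable def DEpts (m : ℕ) : Set X :=
  {x : X | ∀ ε > 0, ∃ δ > 0,
    supFolnerLimsup (fun g : G => diamm m (g • ball x δ)) < ε}

/-- `(X,G)` is diam-mean `m`-sensitive. -/
def DiamMeanSensitive (m : ℕ) : Prop :=
  ∃ ε > 0, ∀ U : Set X, IsOpen U → U.Nonempty →
    ε ≤ supFolnerLimsup (fun g : G => diamm m (g • U))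

/-- `(X,G)` is diam-mean `m`-equicontinuous. -/
def DiamMeanEquicont (m : ℕ) : Prop :=
  ∀ ε > 0, ∃ δ > 0, ∀ U : Set X, diamm m U < δ →
    supFolnerLimsup (fun g : G => diamm m (g • U)) < ε

/-- A weakly mean-sensitive `m`-tuple. -/
def IsWMSTuple {m : ℕ} (x : Fin m → X) : Prop :=
  ∀ U : Fin m → Set X, (∀ k, IsOpen (U k)) → (∀ k, x k ∈ U k) →
    ∃ η > 0, ∀ V : Set X, IsOpen V → V.Nonempty →
      η < uBD {g : G | ∀ k, ((g • V) ∩ U k).Nonempty}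

end Dyn

section AYAux

variable {G : Type*} [Group G] {X : Type*} [MetricSpace X] [CompactSpace X]
  [MulAction G X] [ContinuousConstSMul G X]

lemma AY.minDist_nonneg (m : ℕ) (x : Fin m → X) : 0 ≤ minDist m x :=
  Real.sInf_nonneg (by rintro r ⟨i, j, _, rfl⟩; exact dist_nonneg)

lemma AY.minDist_le_diam (m : ℕ) (x : Fin m → X) :
    minDist m x ≤ Metric.diam (Set.univ : Set X) := by
  rcases Set.eq_empty_or_nonempty {r | ∃ i j : Fin m, i < j ∧ r = dist (x i) (x j)}
    with h | ⟨r, i, j, hij, rfl⟩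
  · rw [minDist, h, Real.sInf_empty]; exact Metric.diam_nonneg
  · have hbd : BddBelow {r | ∃ i j : Fin m, i < j ∧ r = dist (x i) (x j)} :=
      ⟨0, by rintro s ⟨a, b, _, rfl⟩; exact dist_nonneg⟩
    exact le_trans (csInf_le hbd ⟨i, j, hij, rfl⟩)
      (Metric.dist_le_diam_of_mem isCompact_univ.isBounded (Set.mem_univ _) (Set.mem_univ _))

lemma AY.diamm_nonneg (m : ℕ) (A : Set X) : 0 ≤ diamm m A :=
  Real.sSup_nonneg (by rintro r ⟨x, _, rfl⟩; exact AY.minDist_nonneg m x)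

lemma AY.diamm_le_diam (m : ℕ) (A : Set X) :
    diamm m A ≤ Metric.diam (Set.univ : Set X) :=
  Real.sSup_le (by rintro r ⟨x, _, rfl⟩; exact AY.minDist_le_diam m x) Metric.diam_nonneg

lemma AY.diamm_mono (m : ℕ) {A B : Set X} (h : A ⊆ B) : diamm m A ≤ diamm m B := by
  rcases Set.eq_empty_or_nonempty
      {r | ∃ x : Fin m → X, (∀ i, x i ∈ A) ∧ r = minDist m x} with he | hne
  · rw [diamm, he, Real.sSup_empty]; exact AY.diamm_nonneg m B
  · refine csSup_le_csSup ⟨Metric.diam (Set.univ : Set X), ?_⟩ hne ?_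
    · rintro r ⟨x, _, rfl⟩; exact AY.minDist_le_diam m x
    · rintro r ⟨x, hx, rfl⟩; exact ⟨x, fun i => h (hx i), rfl⟩

lemma AY.folnerAvg_nonneg {F : ℕ → Finset G} {φ : G → ℝ} (hφ : ∀ g, 0 ≤ φ g) (n : ℕ) :
    0 ≤ folnerAvg F φ n :=
  div_nonneg (Finset.sum_nonneg fun g _ => hφ g) (Nat.cast_nonneg _)

lemma AY.folnerAvg_le {F : ℕ → Finset G} {φ : G → ℝ} {D : ℝ} (hφ : ∀ g, φ g ≤ D)
    {n : ℕ} (hne : (F n).Nonempty) : folnerAvg F φ n ≤ D := by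
  have hc : (0:ℝ) < (F n).card := by exact_mod_cast Finset.card_pos.2 hne
  rw [folnerAvg, div_le_iff₀ hc]
  calc ∑ g ∈ F n, φ g ≤ ∑ _g ∈ F n, D := Finset.sum_le_sum fun g _ => hφ g
    _ = D * (F n).card := by rw [Finset.sum_const, nsmul_eq_mul, mul_comm]

lemma AY.folnerAvg_mono {F : ℕ → Finset G} {φ ψ : G → ℝ} (h : ∀ g, φ g ≤ ψ g) (n : ℕ) :
    folnerAvg F φ n ≤ folnerAvg F ψ n :=
  div_le_div_of_nonneg_right (Finset.sum_le_sum fun g _ => h g) (Nat.cast_nonneg _)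

lemma AY.limsup_folnerAvg_mem_Icc {F : ℕ → Finset G} (hF : IsFolner F) {φ : G → ℝ} {D : ℝ}
    (h0 : ∀ g, 0 ≤ φ g) (hD : ∀ g, φ g ≤ D) :
    limsup (folnerAvg F φ) atTop ∈ Set.Icc (0:ℝ) D := by
  have hb : ∀ n, folnerAvg F φ n ≤ D := fun n => AY.folnerAvg_le hD (hF.1 n)
  have h0' : ∀ n, 0 ≤ folnerAvg F φ n := AY.folnerAvg_nonneg h0
  constructor
  · exact le_limsup_of_frequently_le (Frequently.of_forall h0')
      ⟨D, Filter.eventually_map.mpr (Filter.Eventually.of_forall hb)⟩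
  · exact limsup_le_of_le
      (isCoboundedUnder_le_of_le atTop h0')
      (Filter.Eventually.of_forall hb)

lemma AY.bddAbove_limsupSet {φ : G → ℝ} {D : ℝ} (h0 : ∀ g, 0 ≤ φ g) (hD : ∀ g, φ g ≤ D) :
    BddAbove {a | ∃ F : ℕ → Finset G, IsFolner F ∧ a = limsup (folnerAvg F φ) atTop} :=
  ⟨D, by rintro a ⟨F, hF, rfl⟩; exact (AY.limsup_folnerAvg_mem_Icc hF h0 hD).2⟩

lemma AY.supFolnerLimsup_nonneg {φ : G → ℝ} {D : ℝ}
    (h0 : ∀ g, 0 ≤ φ g) (hD : ∀ g, φ g ≤ D) : 0 ≤ supFolnerLimsup φ :=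
  Real.sSup_nonneg (by
    rintro a ⟨F, hF, rfl⟩; exact (AY.limsup_folnerAvg_mem_Icc hF h0 hD).1)

lemma AY.supFolnerLimsup_mono {φ ψ : G → ℝ} {D : ℝ}
    (h0φ : ∀ g, 0 ≤ φ g) (h0ψ : ∀ g, 0 ≤ ψ g) (hDψ : ∀ g, ψ g ≤ D)
    (h : ∀ g, φ g ≤ ψ g) : supFolnerLimsup φ ≤ supFolnerLimsup ψ := by
  refine Real.sSup_le ?_ (AY.supFolnerLimsup_nonneg h0ψ hDψ)
  rintro a ⟨F, hF, rfl⟩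
  have h1 : limsup (folnerAvg F φ) atTop ≤ limsup (folnerAvg F ψ) atTop := by
    refine limsup_le_limsup (Filter.Eventually.of_forall (AY.folnerAvg_mono h)) ?_ ?_
    · exact isCoboundedUnder_le_of_le atTop (AY.folnerAvg_nonneg h0φ)
    · exact ⟨D, Filter.eventually_map.mpr
        (Filter.Eventually.of_forall fun n => AY.folnerAvg_le hDψ (hF.1 n))⟩
  exact h1.trans (le_csSup (AY.bddAbove_limsupSet h0ψ hDψ) ⟨F, hF, rfl⟩)

lemma AY.isFolner_mul_right {F : ℕ → Finset G} (hF : IsFolner F) (h : G) :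
    IsFolner (fun n => (F n).image (· * h)) := by
  have hinj : Function.Injective (· * h) := mul_left_injective h
  constructor
  · exact fun n => (hF.1 n).image _
  · intro K
    have key : ∀ n, ((symmDiff ((F n).image (· * h))
        (Finset.image₂ (· * ·) K ((F n).image (· * h)))).card : ℝ)
        / (((F n).image (· * h)).card : ℝ)
        = ((symmDiff (F n) (Finset.image₂ (· * ·) K (F n))).card : ℝ) / (F n).card := by
      intro n
      have h1 : Finset.image₂ (· * ·) K ((F n).image (· * h))
          = (Finset.image₂ (· * ·) K (F n)).image (· * h) := by
        rw [Finset.image₂_image_right, Finset.image_image₂]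
        simp only [mul_assoc]
      rw [h1, ← Finset.image_symmDiff _ _ hinj,
        Finset.card_image_of_injective _ hinj, Finset.card_image_of_injective _ hinj]
    have := hF.2 K
    exact fun hK => (this hK).congr fun n => (key n).symm

lemma AY.folnerAvg_mul_right {F : ℕ → Finset G} (φ : G → ℝ) (h : G) (n : ℕ) :
    folnerAvg F (fun g => φ (g * h)) n = folnerAvg (fun n => (F n).image (· * h)) φ n := by
  have hinj : Function.Injective (· * h) := mul_left_injective h
  rw [folnerAvg, folnerAvg, Finset.sum_image (fun a _ b _ hab => hinj hab),
    Finset.card_image_of_injective _ hinj]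

lemma AY.supFolnerLimsup_translate {φ : G → ℝ} {D : ℝ}
    (h0 : ∀ g, 0 ≤ φ g) (hD : ∀ g, φ g ≤ D) (h : G) :
    supFolnerLimsup (fun g => φ (g * h)) ≤ supFolnerLimsup φ := by
  refine Real.sSup_le ?_ (AY.supFolnerLimsup_nonneg h0 hD)
  rintro a ⟨F, hF, rfl⟩
  have heq : limsup (folnerAvg F fun g => φ (g * h)) atTop
      = limsup (folnerAvg (fun n => (F n).image (· * h)) φ) atTop := by
    congr 1; funext n; exact AY.folnerAvg_mul_right φ h n
  rw [heq]
  exact le_csSup (AY.bddAbove_limsupSet h0 hD) ⟨_, AY.isFolner_mul_right hF h, rfl⟩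

lemma AY.isOpen_DEset (m : ℕ) (ε : ℝ) : IsOpen (DEset G X m ε) := by
  rw [Metric.isOpen_iff]
  rintro x ⟨δ, hδ, hx⟩
  refine ⟨δ / 2, by linarith, fun y hy => ⟨δ / 2, by linarith, lt_of_le_of_lt ?_ hx⟩⟩
  have hy' : dist y x < δ / 2 := mem_ball.mp hy
  refine AY.supFolnerLimsup_mono (D := Metric.diam (Set.univ : Set X))
    (fun g => AY.diamm_nonneg m _) (fun g => AY.diamm_nonneg m _)
    (fun g => AY.diamm_le_diam m _) fun g => ?_
  exact AY.diamm_mono m (Set.smul_set_mono (Metric.ball_subset_ball' (by linarith)))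

set_option maxHeartbeats 1000000 in
lemma AY.smul_mem_DEset {m : ℕ} {ε : ℝ} {x : X} (hx : x ∈ DEset G X m ε) (h : G) :
    h • x ∈ DEset G X m ε := by
  obtain ⟨δ, hδ, hlt⟩ := hx
  have hopen : IsOpen (h • ball x δ) := (isOpen_ball).smul h
  have hmem : h • x ∈ h • ball x δ := Set.smul_mem_smul_set (mem_ball_self hδ)
  obtain ⟨δ', hδ', hsub⟩ := Metric.isOpen_iff.mp hopen _ hmem
  refine ⟨δ', hδ', ?_⟩
  have step1 : supFolnerLimsup (fun g : G => diamm m (g • ball (h • x) δ'))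
      ≤ supFolnerLimsup (fun g : G => diamm m ((g * h) • ball x δ)) := by
    refine AY.supFolnerLimsup_mono (D := Metric.diam (Set.univ : Set X))
      (fun g => AY.diamm_nonneg m _) (fun g => AY.diamm_nonneg m _)
      (fun g => AY.diamm_le_diam m _) fun g => ?_
    refine AY.diamm_mono m ?_
    rw [mul_smul]
    exact Set.smul_set_mono hsub
  have step2 : supFolnerLimsup (fun g : G => diamm m ((g * h) • ball x δ))
      ≤ supFolnerLimsup (fun g : G => diamm m (g • ball x δ)) :=
    AY.supFolnerLimsup_translate (φ := fun g : G => diamm m (g • ball x δ))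
      (fun g => AY.diamm_nonneg m _) (fun g => AY.diamm_le_diam m _) h
  exact lt_of_le_of_lt (step1.trans step2) hlt

lemma AY.DEpts_eq_iInter (m : ℕ) :
    DEpts G X m = ⋂ n : ℕ, DEset G X m (1 / (n + 1)) := by
  ext x
  simp only [DEpts, Set.mem_setOf_eq, Set.mem_iInter]
  constructor
  · intro hx n
    obtain ⟨δ, hδ, hlt⟩ := hx (1 / ((n : ℝ) + 1)) (by positivity)
    exact ⟨δ, hδ, hlt⟩
  · intro hx ε hε
    obtain ⟨n, hn⟩ := exists_nat_one_div_lt hε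
    obtain ⟨δ, hδ, hlt⟩ := hx n
    exact ⟨δ, hδ, hlt.trans hn⟩

end AYAux

/-- Auslander–Yorke dichotomy for diam-mean equicontinuity,
transitive case. -/
theorem auslander_yorke_diam_mean_transitive {G X : Type*} [Group G]
    [Countable G] [Infinite G] [MetricSpace X] [CompactSpace X] [MulAction G X]
    [ContinuousConstSMul G X]
    (hG : ∃ F : ℕ → Finset G, IsFolner F)
    (htrans : ∃ x : X, Dense (MulAction.orbit G x : Set X)) (m : ℕ) :
    (Dense (DEpts G X m) ∧ IsGδ (DEpts G X m)) ∨
      (DEpts G X m = ∅ ∧ DiamMeanSensitive G X m) := by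
  by_cases hne : ∀ n : ℕ, (DEset G X m (1 / (n + 1))).Nonempty
  · left
    obtain ⟨x₀, hx₀⟩ := htrans
    -- the transitive point belongs to every DEset
    have hx₀mem : ∀ n : ℕ, x₀ ∈ DEset G X m (1 / (n + 1)) := by
      intro n
      obtain ⟨y, hy, hyU⟩ := hx₀.exists_mem_open (AY.isOpen_DEset m (1 / (n + 1))) (hne n)
      obtain ⟨g, rfl⟩ := hy
      have := AY.smul_mem_DEset hyU g⁻¹
      rwa [inv_smul_smul] at this
    have horbit : (MulAction.orbit G x₀ : Set X) ⊆ DEpts G X m := by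
      rintro _ ⟨g, rfl⟩
      rw [AY.DEpts_eq_iInter]
      exact Set.mem_iInter.mpr fun n => AY.smul_mem_DEset (hx₀mem n) g
    refine ⟨hx₀.mono horbit, ?_⟩
    rw [AY.DEpts_eq_iInter]
    exact IsGδ.iInter_of_isOpen fun n => AY.isOpen_DEset m (1 / (n + 1))
  · right
    push_neg at hne
    obtain ⟨n, hn⟩ := hne
    have hε : (0:ℝ) < 1 / ((n : ℝ) + 1) := by positivity
    have hkey : ∀ U : Set X, IsOpen U → U.Nonempty →
        1 / ((n : ℝ) + 1) ≤ supFolnerLimsup (fun g : G => diamm m (g • U)) := by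
      intro U hU ⟨x, hxU⟩
      obtain ⟨δ, hδ, hsub⟩ := Metric.isOpen_iff.mp hU x hxU
      have hx : x ∉ DEset G X m (1 / (n + 1)) := by rw [hn]; exact Set.notMem_empty x
      have hge : 1 / ((n : ℝ) + 1)
          ≤ supFolnerLimsup (fun g : G => diamm m (g • ball x δ)) := by
        by_contra hlt
        exact hx ⟨δ, hδ, lt_of_not_ge hlt⟩
      refine hge.trans ?_
      refine AY.supFolnerLimsup_mono (D := Metric.diam (Set.univ : Set X))
        (fun g => AY.diamm_nonneg m _) (fun g => AY.diamm_nonneg m _)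
        (fun g => AY.diamm_le_diam m _) fun g => ?_
      exact AY.diamm_mono m (Set.smul_set_mono hsub)
    constructor
    · rw [Set.eq_empty_iff_forall_notMem]
      intro x hx
      obtain ⟨δ, hδ, hlt⟩ := hx _ hε
      have hx' : x ∈ DEset G X m (1 / (n + 1)) := ⟨δ, hδ, hlt⟩
      rw [hn] at hx'
      exact hx'
    · exact ⟨1 / ((n : ℝ) + 1), hε, hkey⟩
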